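/- In a stochastic tree, for every policy π and every bonus function R such that π is everywhere-optimal for R^A + R, the total cost satisfies ∑_{(s,a)} R(s,a) ≥ ∑_{(s,a)} R^B_π(s,a) = ∑_{non-terminal s} ( V_s(π^A, R^A) − Q^{π^A}(s, π(s), R^A) ). Consequently the advantage-based bonus R^B_π is a minimal implementation of π: it makes π everywhere-optimal for R^A + R^B_π and has the least total cost among all bonus functions doing so. -/

import Mathlib

/-!
Write `U = V^{πA}(RA)` and let `R` be a bonus under which `π` is everywhere-optimal, with value
`W = V^π(RA + R)`. Then `D = W - U` is nonnegative (`U ≤ V^{πA}(RA + R) ≤ W`) and vanishes at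
terminal states, and the Bellman equations give, at every non-terminal `s`,
`R(s, π s) = adv(s) + D(s) - 𝔼[D(child of s)]`, where `adv(s) = U(s) - Q^{πA}(s, π s, RA)`.
Summing over `s`, every state is a child of at most one state in a tree, so its total incoming
probability is at most `1` and the child terms are dominated by `∑ D`; hence `∑ R ≥ ∑ adv`.
Conversely, under `RA + R^B_π` the function `U` satisfies the Bellman equation along `π` and
dominates every one-step backup, so `π` is everywhere-optimal with value `U`.
-/

open Finset

variable {S A : Type}

def IsPolicy (act : S → Finset A) (π : S → A) : Prop :=
  ∀ s, act s ≠ ∅ → π s ∈ act s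

theorem IsPolicy.update [DecidableEq S] {act : S → Finset A} {π : S → A} (hπ : IsPolicy act π)
    {s : S} {a : A} (ha : a ∈ act s) : IsPolicy act (Function.update π s a) := by
  intro u hu
  by_cases hus : u = s
  · subst hus; simpa using ha
  · simpa [hus] using hπ u hu

/-- At a terminal state `π s` is an arbitrary action and `P s (π s)` is unconstrained, so sums
of transition probabilities along a policy range over non-terminal states only. -/
def nonterminal [Fintype S] [DecidableEq A] (act : S → Finset A) : Finset S :=
  univ.filter fun s => act s ≠ ∅

@[simp]
theorem mem_nonterminal [Fintype S] [DecidableEq A] {act : S → Finset A} {s : S} :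
    s ∈ nonterminal act ↔ act s ≠ ∅ := by
  simp [nonterminal]

/-- Acyclicity of the transition graph, witnessed by a rank that decreases along every edge. -/
structure IsRankedMDP (act : S → Finset A) (P : S → A → S → ℝ) (rank : S → ℕ) : Prop where
  nonneg : ∀ s a t, 0 ≤ P s a t
  rank_lt : ∀ s, ∀ a ∈ act s, ∀ t, 0 < P s a t → rank t < rank s

structure IsStochasticTree (act : S → Finset A) (P : S → A → S → ℝ) (s₀ : S) : Prop where
  unique_parent : ∀ t, t ≠ s₀ → ∃! s, ∃ a ∈ act s, 0 < P s a t
  root : ∀ s, ∀ a ∈ act s, P s a s₀ = 0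

variable [Fintype S]

/-- `backup P R (V π R) s a` is the paper's `Q^π(s, a, R)`. -/
def backup (P : S → A → S → ℝ) (R : S → A → ℝ) (v : S → ℝ) (s : S) (a : A) : ℝ :=
  R s a + ∑ t, P s a t * v t

structure IsValueFunction (act : S → Finset A) (P : S → A → S → ℝ)
    (V : (S → A) → (S → A → ℝ) → S → ℝ) : Prop where
  terminal : ∀ π R s, act s = ∅ → V π R s = 0
  bellman : ∀ π R s, act s ≠ ∅ → V π R s = backup P R (V π R) s (π s)

def IsOptimal (act : S → Finset A) (V : (S → A) → (S → A → ℝ) → S → ℝ) (π : S → A)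
    (R : S → A → ℝ) : Prop :=
  ∀ π', IsPolicy act π' → ∀ s, V π' R s ≤ V π R s

namespace IsRankedMDP

variable {act : S → Finset A} {P : S → A → S → ℝ} {rank : S → ℕ}

theorem sum_mul_le_sum_mul (hM : IsRankedMDP act P rank) {s : S} {a : A} (ha : a ∈ act s)
    {f g : S → ℝ} (hfg : ∀ t, rank t < rank s → f t ≤ g t) :
    ∑ t, P s a t * f t ≤ ∑ t, P s a t * g t := by
  refine sum_le_sum fun t _ => ?_
  rcases (hM.nonneg s a t).eq_or_lt with hzero | hpos
  · simp [← hzero]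
  · exact mul_le_mul_of_nonneg_left (hfg t (hM.rank_lt s a ha t hpos)) hpos.le

theorem sum_mul_congr (hM : IsRankedMDP act P rank) {s : S} {a : A} (ha : a ∈ act s)
    {f g : S → ℝ} (hfg : ∀ t, rank t < rank s → f t = g t) :
    ∑ t, P s a t * f t = ∑ t, P s a t * g t :=
  le_antisymm (hM.sum_mul_le_sum_mul ha fun t ht => (hfg t ht).le)
    (hM.sum_mul_le_sum_mul ha fun t ht => (hfg t ht).ge)

end IsRankedMDP

namespace IsValueFunction

variable {act : S → Finset A} {P : S → A → S → ℝ} {rank : S → ℕ}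
  {V : (S → A) → (S → A → ℝ) → S → ℝ} {π : S → A} {R : S → A → ℝ} {v : S → ℝ}

theorem value_le_of_backup_le (hM : IsRankedMDP act P rank) (hV : IsValueFunction act P V)
    (hπ : IsPolicy act π) (hterm : ∀ s, act s = ∅ → 0 ≤ v s)
    (hstep : ∀ s, act s ≠ ∅ → backup P R v s (π s) ≤ v s) (s : S) : V π R s ≤ v s := by
  induction s using (measure rank).wf.induction with | _ s ih =>
  by_cases hs : act s = ∅
  · rw [hV.terminal π R s hs]; exact hterm s hs
  · rw [hV.bellman π R s hs]
    refine le_trans ?_ (hstep s hs)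
    exact add_le_add_right (hM.sum_mul_le_sum_mul (hπ s hs) ih) _

theorem le_value_of_le_backup (hM : IsRankedMDP act P rank) (hV : IsValueFunction act P V)
    (hπ : IsPolicy act π) (hterm : ∀ s, act s = ∅ → v s ≤ 0)
    (hstep : ∀ s, act s ≠ ∅ → v s ≤ backup P R v s (π s)) (s : S) : v s ≤ V π R s := by
  induction s using (measure rank).wf.induction with | _ s ih =>
  by_cases hs : act s = ∅
  · rw [hV.terminal π R s hs]; exact hterm s hs
  · rw [hV.bellman π R s hs]
    refine (hstep s hs).trans ?_
    exact add_le_add_right (hM.sum_mul_le_sum_mul (hπ s hs) ih) _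

theorem value_mono (hM : IsRankedMDP act P rank) (hV : IsValueFunction act P V)
    (hπ : IsPolicy act π) {R₁ R₂ : S → A → ℝ} (hR : ∀ s a, R₁ s a ≤ R₂ s a) (s : S) :
    V π R₁ s ≤ V π R₂ s := by
  refine hV.value_le_of_backup_le hM hπ (fun s hs => (hV.terminal π R₂ s hs).ge)
    (fun s hs => ?_) s
  rw [hV.bellman π R₂ s hs]
  exact add_le_add_left (hR s (π s)) _

theorem value_congr_of_eqOn (hM : IsRankedMDP act P rank) (hV : IsValueFunction act P V)
    {π₁ π₂ : S → A} (hπ₁ : IsPolicy act π₁) (s : S)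
    (heq : ∀ u, rank u ≤ rank s → π₁ u = π₂ u) : V π₁ R s = V π₂ R s := by
  induction s using (measure rank).wf.induction with | _ s ih =>
  by_cases hs : act s = ∅
  · rw [hV.terminal π₁ R s hs, hV.terminal π₂ R s hs]
  · rw [hV.bellman π₁ R s hs, hV.bellman π₂ R s hs, ← heq s le_rfl]
    exact congrArg _ (hM.sum_mul_congr (hπ₁ s hs) fun t ht =>
      ih t ht fun u hu => heq u (hu.trans ht.le))

theorem isOptimal_of_forall_backup_le (hM : IsRankedMDP act P rank)
    (hV : IsValueFunction act P V) (hπ : IsPolicy act π) (hterm : ∀ s, act s = ∅ → v s = 0)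
    (hle : ∀ s, ∀ a ∈ act s, backup P R v s a ≤ v s)
    (heq : ∀ s, act s ≠ ∅ → backup P R v s (π s) = v s) : IsOptimal act V π R := by
  intro π' hπ' s
  calc V π' R s ≤ v s :=
        hV.value_le_of_backup_le hM hπ' (fun s hs => (hterm s hs).ge)
          (fun s hs => hle s _ (hπ' s hs)) s
    _ ≤ V π R s :=
        hV.le_value_of_le_backup hM hπ (fun s hs => (hterm s hs).le)
          (fun s hs => (heq s hs).ge) s

theorem value_update_self [DecidableEq S] (hM : IsRankedMDP act P rank)
    (hV : IsValueFunction act P V) (hπ : IsPolicy act π) {s : S} {a : A} (ha : a ∈ act s) :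
    V (Function.update π s a) R s = backup P R (V π R) s a := by
  have hs : act s ≠ ∅ := ne_empty_of_mem ha
  rw [hV.bellman _ R s hs, Function.update_self]
  refine congrArg _ (hM.sum_mul_congr ha fun t ht => ?_)
  refine hV.value_congr_of_eqOn hM (hπ.update ha) t fun u hu => ?_
  exact Function.update_of_ne (by rintro rfl; omega) _ _

theorem backup_le_value_of_isOptimal [DecidableEq S] (hM : IsRankedMDP act P rank)
    (hV : IsValueFunction act P V) (hπ : IsPolicy act π) (hopt : IsOptimal act V π R)
    {s : S} {a : A} (ha : a ∈ act s) : backup P R (V π R) s a ≤ V π R s :=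
  hV.value_update_self hM hπ ha ▸ hopt _ (hπ.update ha) s

end IsValueFunction

section Nonterminal

variable [DecidableEq A] {act : S → Finset A} {P : S → A → S → ℝ} {π : S → A}

theorem IsStochasticTree.sum_nonterminal_le_one {s₀ : S} (hT : IsStochasticTree act P s₀)
    (hP0 : ∀ s a t, 0 ≤ P s a t) (hP1 : ∀ s, ∀ a ∈ act s, ∑ t, P s a t = 1)
    (hπ : IsPolicy act π) (t : S) : ∑ s ∈ nonterminal act, P s (π s) t ≤ 1 := by
  by_cases ht : t = s₀
  · subst ht
    rw [sum_eq_zero fun s hs => hT.root s _ (hπ s (mem_nonterminal.1 hs))]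
    exact zero_le_one
  obtain ⟨p, ⟨a, ha, -⟩, hparent⟩ := hT.unique_parent t ht
  have hp : act p ≠ ∅ := ne_empty_of_mem ha
  calc ∑ s ∈ nonterminal act, P s (π s) t = P p (π p) t := by
        refine sum_eq_single_of_mem p (mem_nonterminal.2 hp) fun s hs hsp => ?_
        by_contra hne
        exact hsp (hparent s ⟨π s, hπ s (mem_nonterminal.1 hs),
          (hP0 s (π s) t).lt_of_ne' hne⟩)
    _ ≤ ∑ u, P p (π p) u := single_le_sum (fun u _ => hP0 p (π p) u) (mem_univ t)
    _ = 1 := hP1 p (π p) (hπ p hp)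

theorem sum_nonterminal_sum_mul_le (hin : ∀ t, ∑ s ∈ nonterminal act, P s (π s) t ≤ 1)
    {D : S → ℝ} (hD : ∀ t, 0 ≤ D t) :
    ∑ s ∈ nonterminal act, ∑ t, P s (π s) t * D t ≤ ∑ t, D t := by
  rw [sum_comm]
  refine sum_le_sum fun t _ => ?_
  rw [← sum_mul]
  exact mul_le_of_le_one_left (hD t) (hin t)

theorem IsValueFunction.sum_advantage_le_sum_bonus {V : (S → A) → (S → A → ℝ) → S → ℝ}
    (hV : IsValueFunction act P V) (hin : ∀ t, ∑ s ∈ nonterminal act, P s (π s) t ≤ 1)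
    {RA R : S → A → ℝ} {v : S → ℝ} (hterm : ∀ s, act s = ∅ → v s = 0)
    (hv : ∀ s, v s ≤ V π (RA + R) s) :
    ∑ s ∈ nonterminal act, (v s - backup P RA v s (π s)) ≤ ∑ s ∈ nonterminal act, R s (π s) := by
  set D : S → ℝ := fun s => V π (RA + R) s - v s
  have hD : ∀ s, 0 ≤ D s := fun s => sub_nonneg.2 (hv s)
  have hDsum : ∑ s ∈ nonterminal act, D s = ∑ s, D s := by
    refine sum_subset (subset_univ _) fun s _ hs => ?_
    have hs : act s = ∅ := by simpa using hs
    simp [D, hV.terminal π _ s hs, hterm s hs]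
  have hstep : ∀ s ∈ nonterminal act, R s (π s) - (v s - backup P RA v s (π s)) =
      D s - ∑ t, P s (π s) t * D t := by
    intro s hs
    simp only [D]
    rw [hV.bellman π _ s (mem_nonterminal.1 hs)]
    simp only [backup, Pi.add_apply, mul_sub, sum_sub_distrib]
    ring
  rw [← sub_nonneg, ← sum_sub_distrib, sum_congr rfl hstep, sum_sub_distrib, hDsum]
  linarith [sum_nonterminal_sum_mul_le hin hD]

def advantageBonus (act : S → Finset A) (P : S → A → S → ℝ) (RA : S → A → ℝ) (u : S → ℝ)
    (π : S → A) : S → A → ℝ :=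
  fun s b => if act s ≠ ∅ ∧ b = π s then u s - backup P RA u s b else 0

variable {RA : S → A → ℝ} {u : S → ℝ}

theorem sum_sum_advantageBonus [Fintype A] :
    ∑ s, ∑ b, advantageBonus act P RA u π s b =
      ∑ s ∈ nonterminal act, (u s - backup P RA u s (π s)) := by
  rw [nonterminal, sum_filter]
  refine sum_congr rfl fun s _ => ?_
  by_cases hs : act s = ∅ <;> simp [advantageBonus, hs]

theorem backup_add_advantageBonus_self {s : S} (hs : act s ≠ ∅) :
    backup P (RA + advantageBonus act P RA u π) u s (π s) = u s := by
  simp only [backup, Pi.add_apply, advantageBonus, hs, ne_eq, not_false_eq_true, and_self,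
    if_true]
  ring

theorem backup_add_advantageBonus_le (hu : ∀ s, ∀ a ∈ act s, backup P RA u s a ≤ u s)
    {s : S} {a : A} (ha : a ∈ act s) :
    backup P (RA + advantageBonus act P RA u π) u s a ≤ u s := by
  by_cases hπa : a = π s
  · subst hπa
    exact (backup_add_advantageBonus_self (ne_empty_of_mem ha)).le
  · simpa [backup, advantageBonus, hπa] using hu s a ha

end Nonterminal

/-- in a stochastic tree, any bonus function making `π` everywhere-optimal
costs at least as much as the advantage-based bonus `R^B_π`, whose total cost is the sum
over non-terminal states of the local advantages; hence `R^B_π` is a minimal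
implementation of `π`. -/
theorem stmt_6 {S A : Type} [Fintype S] [Fintype A] [DecidableEq S] [DecidableEq A]
    (s₀ : S) (act : S → Finset A)
    (P : S → A → S → ℝ)
    (hP0 : ∀ s a t, 0 ≤ P s a t)
    (hP1 : ∀ s, ∀ a ∈ act s, ∑ t, P s a t = 1)
    (rank : S → ℕ)
    (hacyc : ∀ s, ∀ a ∈ act s, ∀ t, 0 < P s a t → rank t < rank s)
    (htree : ∀ t, t ≠ s₀ → ∃! s, ∃ a ∈ act s, 0 < P s a t)
    (hroot : ∀ s, ∀ a ∈ act s, P s a s₀ = 0)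
    (V : (S → A) → (S → A → ℝ) → S → ℝ)
    (hVterm : ∀ (π : S → A) (R : S → A → ℝ) (s : S), act s = ∅ → V π R s = 0)
    (hVrec : ∀ (π : S → A) (R : S → A → ℝ) (s : S), act s ≠ ∅ →
      V π R s = R s (π s) + ∑ t, P s (π s) t * V π R t)
    (RA : S → A → ℝ)
    (πA : S → A) (hπA : ∀ s, act s ≠ ∅ → πA s ∈ act s)
    (hπAopt : ∀ π : S → A, (∀ s, act s ≠ ∅ → π s ∈ act s) → ∀ s, V π RA s ≤ V πA RA s)
    (π : S → A) (hπ : ∀ s, act s ≠ ∅ → π s ∈ act s)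
    (RBπ : S → A → ℝ)
    (hRBπ : ∀ s b, RBπ s b =
      if act s ≠ ∅ ∧ b = π s then
        V πA RA s - (RA s b + ∑ t, P s b t * V πA RA t)
      else 0) :
    (∀ R : S → A → ℝ, (∀ s b, 0 ≤ R s b) →
      (∀ π' : S → A, (∀ s, act s ≠ ∅ → π' s ∈ act s) → ∀ s,
        V π' (fun s b => RA s b + R s b) s ≤ V π (fun s b => RA s b + R s b) s) →
      (∑ s, ∑ b, RBπ s b) ≤ ∑ s, ∑ b, R s b) ∧
    ((∑ s, ∑ b, RBπ s b) = ∑ s ∈ Finset.univ.filter (fun s => act s ≠ ∅),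
      (V πA RA s - (RA s (π s) + ∑ t, P s (π s) t * V πA RA t))) ∧
    (∀ π' : S → A, (∀ s, act s ≠ ∅ → π' s ∈ act s) → ∀ s,
      V π' (fun s b => RA s b + RBπ s b) s ≤ V π (fun s b => RA s b + RBπ s b) s) := by
  have hM : IsRankedMDP act P rank := ⟨hP0, hacyc⟩
  have hV : IsValueFunction act P V := ⟨hVterm, hVrec⟩
  obtain rfl : RBπ = advantageBonus act P RA (V πA RA) π := funext fun s => funext (hRBπ s)
  have hQ : ∀ s, ∀ a ∈ act s, backup P RA (V πA RA) s a ≤ V πA RA s :=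
    fun s a ha => hV.backup_le_value_of_isOptimal hM hπA hπAopt ha
  refine ⟨fun R hR hopt => ?_, sum_sum_advantageBonus,
    hV.isOptimal_of_forall_backup_le hM hπ (hVterm πA RA)
      (fun s a ha => backup_add_advantageBonus_le hQ ha)
      (fun s hs => backup_add_advantageBonus_self hs)⟩
  have hin := IsStochasticTree.sum_nonterminal_le_one ⟨htree, hroot⟩ hP0 hP1 hπ
  have hle : ∀ s, V πA RA s ≤ V π (RA + R) s := fun s =>
    (hV.value_mono hM hπA (fun s b => le_add_of_nonneg_right (hR s b)) s).trans (hopt πA hπA s)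
  calc ∑ s, ∑ b, advantageBonus act P RA (V πA RA) π s b
      = ∑ s ∈ nonterminal act, (V πA RA s - backup P RA (V πA RA) s (π s)) :=
        sum_sum_advantageBonus
    _ ≤ ∑ s ∈ nonterminal act, R s (π s) := hV.sum_advantage_le_sum_bonus hin (hVterm πA RA) hle
    _ ≤ ∑ s ∈ nonterminal act, ∑ b, R s b :=
        sum_le_sum fun s _ => single_le_sum (fun b _ => hR s b) (mem_univ _)
    _ ≤ ∑ s, ∑ b, R s b :=
        sum_le_sum_of_subset_of_nonneg (subset_univ _) fun s _ _ => sum_nonneg fun b _ => hR s b
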